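/- arXiv:0808.3330 — 2 statements merged into one kernel-verified Lean document; each statement's English description precedes it below -/
import Mathlib

section
/- Let (A,≻,≺) be a finite-dimensional dendriform algebra over a field F with associated associative product x*y = x≻y + x≺y, and let r ∈ A⊗A be a symmetric nondegenerate solution of the D-equation. Define products on A* by a*≻'b* = R*(r(a*))b* − L≺*(r(b*))a* and a*≺'b* = −R≻*(r(a*))b* + L*(r(b*))a*, where ⟨R*(x)a*, y⟩ = ⟨a*, y*x⟩, ⟨L*(x)a*, y⟩ = ⟨a*, x*y⟩, ⟨R≻*(x)a*, y⟩ = ⟨a*, y≻x⟩, ⟨L≺*(x)a*, y⟩ = ⟨a*, x≺y⟩. Then r(a*≻'b*) = r(a*) ≻ r(b*) and r(a*≺'b*) = r(a*) ≺ r(b*) for all a*, b* ∈ A*; that is, the induced linear map r : A* → A is an isomorphism of dendriform algebras. -/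
open TensorProduct LinearMap

section Prelude
variable {F : Type*} [Field F]

/-- Associativity of a (nonunital) bilinear product. -/
def IsAssocMul {A : Type*} [AddCommGroup A] [Module F A]
    (m : A →ₗ[F] A →ₗ[F] A) : Prop :=
  ∀ x y z, m (m x y) z = m x (m y z)

/-- `(l, r, V)` is a bimodule of the associative algebra `(A, m)`. -/
def IsBimodule {A V : Type*} [AddCommGroup A] [Module F A]
    [AddCommGroup V] [Module F V]
    (m : A →ₗ[F] A →ₗ[F] A) (l r : A →ₗ[F] V →ₗ[F] V) : Prop :=
  (∀ x y v, l (m x y) v = l x (l y v)) ∧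
  (∀ x y v, r (m x y) v = r y (r x v)) ∧
  (∀ x y v, l x (r y v) = r y (l x v))

/-- `(A, B, lA, rA, lB, rB)` is a matched pair of associative algebras. -/
def IsMatchedPair {A B : Type*} [AddCommGroup A] [Module F A]
    [AddCommGroup B] [Module F B]
    (mA : A →ₗ[F] A →ₗ[F] A) (mB : B →ₗ[F] B →ₗ[F] B)
    (lA rA : A →ₗ[F] B →ₗ[F] B) (lB rB : B →ₗ[F] A →ₗ[F] A) : Prop :=
  IsAssocMul mA ∧ IsAssocMul mB ∧ IsBimodule mA lA rA ∧ IsBimodule mB lB rB ∧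
  (∀ x a b, lA x (mB a b) = lA (rB a x) b + mB (lA x a) b) ∧
  (∀ x a b, rA x (mB a b) = rA (lB b x) a + mB a (rA x b)) ∧
  (∀ a x y, lB a (mA x y) = lB (rA x a) y + mA (lB a x) y) ∧
  (∀ a x y, rB a (mA x y) = rB (lA y a) x + mA x (rB a y)) ∧
  (∀ x a b, lA (lB a x) b + mB (rA x a) b - rA (rB b x) a - mB a (lA x b) = 0) ∧
  (∀ a x y, lB (lA x a) y + mA (rB a x) y - rB (rA y a) x - mA x (lB a y) = 0)

/-- Dendriform algebra axioms for a pair of bilinear products `≻ = s`, `≺ = p`. -/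
def IsDendriform {A : Type*} [AddCommGroup A] [Module F A]
    (s p : A →ₗ[F] A →ₗ[F] A) : Prop :=
  (∀ x y z, p (p x y) z = p x (s y z + p y z)) ∧
  (∀ x y z, p (s x y) z = s x (p y z)) ∧
  (∀ x y z, s x (s y z) = s (s x y + p x y) z)

/-- The pairing of `f ⊗ g ∈ A* ⊗ A*` with elements of `A ⊗ A`. -/
noncomputable def pair2 {A : Type*} [AddCommGroup A] [Module F A]
    (f g : Module.Dual F A) : (A ⊗[F] A) →ₗ[F] F :=
  (TensorProduct.lid F F).toLinearMap ∘ₗ TensorProduct.map f g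

/-- `t12 m (r ⊗ s)` is `r₁₂ ∙ s₁₃`: on `(x ⊗ y) ⊗ (x' ⊗ y')` it gives `m x x' ⊗ y ⊗ y'`. -/
noncomputable def t12 {A : Type*} [AddCommGroup A] [Module F A]
    (m : A →ₗ[F] A →ₗ[F] A) :
    ((A ⊗[F] A) ⊗[F] (A ⊗[F] A)) →ₗ[F] A ⊗[F] (A ⊗[F] A) :=
  TensorProduct.map (TensorProduct.lift m) LinearMap.id ∘ₗ
    (TensorProduct.tensorTensorTensorComm F A A A A).toLinearMap

/-- `t13 m (r ⊗ s)` is `r₁₃ ∙ s₂₃`: on `(x ⊗ y) ⊗ (x' ⊗ y')` it gives `x ⊗ x' ⊗ m y y'`. -/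
noncomputable def t13 {A : Type*} [AddCommGroup A] [Module F A]
    (m : A →ₗ[F] A →ₗ[F] A) :
    ((A ⊗[F] A) ⊗[F] (A ⊗[F] A)) →ₗ[F] A ⊗[F] (A ⊗[F] A) :=
  (TensorProduct.assoc F A A A).toLinearMap ∘ₗ
    TensorProduct.map LinearMap.id (TensorProduct.lift m) ∘ₗ
    (TensorProduct.tensorTensorTensorComm F A A A A).toLinearMap

/-- `t23 m (r ⊗ s)` is `r₂₃ ∙ s₁₂`: on `(x ⊗ y) ⊗ (x' ⊗ y')` it gives `x' ⊗ m x y' ⊗ y`. -/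
noncomputable def t23 {A : Type*} [AddCommGroup A] [Module F A]
    (m : A →ₗ[F] A →ₗ[F] A) :
    ((A ⊗[F] A) ⊗[F] (A ⊗[F] A)) →ₗ[F] A ⊗[F] (A ⊗[F] A) :=
  (TensorProduct.leftComm F A A A).toLinearMap ∘ₗ
    TensorProduct.map LinearMap.id (TensorProduct.comm F A A).toLinearMap ∘ₗ
    TensorProduct.map (TensorProduct.lift m) LinearMap.id ∘ₗ
    (TensorProduct.tensorTensorTensorComm F A A A A).toLinearMap ∘ₗ
    TensorProduct.map LinearMap.id (TensorProduct.comm F A A).toLinearMap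

/-- `aybE m r = r₁₂r₁₃ + r₁₃r₂₃ − r₂₃r₁₂`, the associative Yang–Baxter expression. -/
noncomputable def aybE {A : Type*} [AddCommGroup A] [Module F A]
    (m : A →ₗ[F] A →ₗ[F] A) (r : A ⊗[F] A) : A ⊗[F] (A ⊗[F] A) :=
  t12 m (r ⊗ₜ r) + t13 m (r ⊗ₜ r) - t23 m (r ⊗ₜ r)

end Prelude

section Aux
variable {F A : Type*} [Field F] [AddCommGroup A] [Module F A]

/-- Contraction in the second tensor factor: `x ⊗ y ↦ v y • x`. -/
noncomputable def ctr2 (v : Module.Dual F A) : (A ⊗[F] A) →ₗ[F] A :=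
  (TensorProduct.rid F A).toLinearMap ∘ₗ TensorProduct.map LinearMap.id v

/-- Contraction in the first tensor factor: `x ⊗ y ↦ v x • y`. -/
noncomputable def ctr1 (v : Module.Dual F A) : (A ⊗[F] A) →ₗ[F] A :=
  (TensorProduct.lid F A).toLinearMap ∘ₗ TensorProduct.map v LinearMap.id

@[simp] lemma ctr2_tmul (v : Module.Dual F A) (x y : A) :
    ctr2 v (x ⊗ₜ y) = v y • x := by simp [ctr2]

@[simp] lemma ctr1_tmul (v : Module.Dual F A) (x y : A) :
    ctr1 v (x ⊗ₜ y) = v x • y := by simp [ctr1]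

/-- Triple pairing of `A ⊗ (A ⊗ A)` with three dual vectors. -/
noncomputable def T3 (u v w : Module.Dual F A) : A ⊗[F] (A ⊗[F] A) →ₗ[F] F :=
  (TensorProduct.lid F F).toLinearMap ∘ₗ TensorProduct.map u (pair2 v w)

@[simp] lemma T3_tmul (u v w : Module.Dual F A) (x y z : A) :
    T3 u v w (x ⊗ₜ (y ⊗ₜ z)) = u x * (v y * w z) := by
  simp [T3, pair2, smul_eq_mul, mul_comm]

lemma key12 (m : A →ₗ[F] A →ₗ[F] A) (u v w : Module.Dual F A) (ρ σ : A ⊗[F] A) :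
    T3 u v w (t12 m (ρ ⊗ₜ σ)) = u (m (ctr2 v ρ) (ctr2 w σ)) := by
  induction ρ using TensorProduct.induction_on with
  | zero => simp
  | tmul x y =>
    induction σ using TensorProduct.induction_on with
    | zero => simp
    | tmul x' y' =>
      have h : t12 m ((x ⊗ₜ y) ⊗ₜ (x' ⊗ₜ[F] y')) = m x x' ⊗ₜ (y ⊗ₜ y') := by simp [t12]
      rw [h, T3_tmul, ctr2_tmul, ctr2_tmul]
      simp only [map_smul, LinearMap.smul_apply, smul_eq_mul]
      ring
    | add σ₁ σ₂ h1 h2 => simp [tmul_add, map_add, h1, h2]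
  | add ρ₁ ρ₂ h1 h2 => simp [add_tmul, map_add, h1, h2]

lemma key13 (m : A →ₗ[F] A →ₗ[F] A) (u v w : Module.Dual F A) (ρ σ : A ⊗[F] A) :
    T3 u v w (t13 m (ρ ⊗ₜ σ)) = w (m (ctr1 u ρ) (ctr1 v σ)) := by
  induction ρ using TensorProduct.induction_on with
  | zero => simp
  | tmul x y =>
    induction σ using TensorProduct.induction_on with
    | zero => simp
    | tmul x' y' =>
      have h : t13 m ((x ⊗ₜ y) ⊗ₜ (x' ⊗ₜ[F] y')) = x ⊗ₜ (x' ⊗ₜ m y y') := by simp [t13]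
      rw [h, T3_tmul, ctr1_tmul, ctr1_tmul]
      simp only [map_smul, LinearMap.smul_apply, smul_eq_mul]
      ring
    | add σ₁ σ₂ h1 h2 => simp [tmul_add, map_add, h1, h2]
  | add ρ₁ ρ₂ h1 h2 => simp [add_tmul, map_add, h1, h2]

lemma key23 (m : A →ₗ[F] A →ₗ[F] A) (u v w : Module.Dual F A) (ρ σ : A ⊗[F] A) :
    T3 u v w (t23 m (ρ ⊗ₜ σ)) = v (m (ctr2 w ρ) (ctr1 u σ)) := by
  induction ρ using TensorProduct.induction_on with
  | zero => simp
  | tmul x y =>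
    induction σ using TensorProduct.induction_on with
    | zero => simp
    | tmul x' y' =>
      have h : t23 m ((x ⊗ₜ y) ⊗ₜ (x' ⊗ₜ[F] y')) = x' ⊗ₜ (m x y' ⊗ₜ y) := by simp [t23]
      rw [h, T3_tmul, ctr2_tmul, ctr1_tmul]
      simp only [map_smul, LinearMap.smul_apply, smul_eq_mul]
      ring
    | add σ₁ σ₂ h1 h2 => simp [tmul_add, map_add, h1, h2]
  | add ρ₁ ρ₂ h1 h2 => simp [add_tmul, map_add, h1, h2]

lemma dual_sep {x y : A} (h : ∀ u : Module.Dual F A, u x = u y) : x = y := by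
  have h0 : ∀ u : Module.Dual F A, u (x - y) = 0 := by
    intro u; simp [h u]
  have := (Module.forall_dual_apply_eq_zero_iff F (x - y)).mp h0
  exact sub_eq_zero.mp this

end Aux


/-- for a symmetric nondegenerate solution `r` of the
`D`-equation, the induced map `r : A* → A` is an isomorphism of dendriform
algebras, for the dendriform products on `A*` given by
`a* ≻' b* = R*(r(a*))b* − L≺*(r(b*))a*` and
`a* ≺' b* = −R≻*(r(a*))b* + L*(r(b*))a*`. -/
theorem rmap_is_dendriform_isomorphism
    {F A : Type*} [Field F] [AddCommGroup A] [Module F A] [FiniteDimensional F A]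
    (s p : A →ₗ[F] A →ₗ[F] A) (hd : IsDendriform s p)
    (r : A ⊗[F] A)
    (hsymm : (TensorProduct.comm F A A) r = r)
    (e : Module.Dual F A ≃ₗ[F] A)
    (he : ∀ u v : Module.Dual F A, u (e v) = pair2 u v r)
    (hD : t12 (s + p) (r ⊗ₜ r) = t13 p (r ⊗ₜ r) + t23 s (r ⊗ₜ r))
    -- the dual operators `R*`, `L*`, `R≻*`, `L≺*`
    (Rst Lst Rs Lp : A →ₗ[F] Module.Dual F A →ₗ[F] Module.Dual F A)
    (hRst : ∀ (x y : A) (a : Module.Dual F A), Rst x a y = a ((s + p) y x))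
    (hLst : ∀ (x y : A) (a : Module.Dual F A), Lst x a y = a ((s + p) x y))
    (hRs : ∀ (x y : A) (a : Module.Dual F A), Rs x a y = a (s y x))
    (hLp : ∀ (x y : A) (a : Module.Dual F A), Lp x a y = a (p x y)) :
    ∀ a b : Module.Dual F A,
      e (Rst (e a) b - Lp (e b) a) = s (e a) (e b) ∧
      e (- Rs (e a) b + Lst (e b) a) = p (e a) (e b) := by
  -- identify `e` with the two contractions against `r`
  have hctr2 : ∀ v : Module.Dual F A, ctr2 v r = e v := by
    intro v
    apply dual_sep (F := F)
    intro u
    have hcomp : (u ∘ₗ ctr2 v : A ⊗[F] A →ₗ[F] F) = pair2 u v := by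
      apply TensorProduct.ext'
      intro x y
      simp [pair2, smul_eq_mul, mul_comm]
    have : u (ctr2 v r) = pair2 u v r := by
      have := congrArg (fun f : A ⊗[F] A →ₗ[F] F => f r) hcomp
      simpa using this
    rw [this, ← he u v]
  have hctr1 : ∀ v : Module.Dual F A, ctr1 v r = e v := by
    intro v
    have hcomp : (ctr1 v ∘ₗ (TensorProduct.comm F A A).toLinearMap :
        A ⊗[F] A →ₗ[F] A) = ctr2 v := by
      apply TensorProduct.ext'
      intro x y
      simp
    have : ctr1 v r = ctr2 v r := by
      conv_lhs => rw [← hsymm]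
      have := congrArg (fun f : A ⊗[F] A →ₗ[F] A => f r) hcomp
      simpa using this
    rw [this, hctr2]
  -- the symmetry of the bilinear form induced by `r`
  have hesymm : ∀ u v : Module.Dual F A, u (e v) = v (e u) := by
    intro u v
    have hcomp : (pair2 u v ∘ₗ (TensorProduct.comm F A A).toLinearMap :
        A ⊗[F] A →ₗ[F] F) = pair2 v u := by
      apply TensorProduct.ext'
      intro x y
      simp [pair2, smul_eq_mul, mul_comm]
    have hp : pair2 u v r = pair2 v u r := by
      conv_lhs => rw [← hsymm]
      have := congrArg (fun f : A ⊗[F] A →ₗ[F] F => f r) hcomp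
      simpa using this
    rw [he u v, he v u, hp]
  -- the key scalar identity obtained by pairing the D-equation with dual vectors
  have star : ∀ u v w : Module.Dual F A,
      u ((s + p) (e v) (e w)) = w (p (e u) (e v)) + v (s (e w) (e u)) := by
    intro u v w
    have h := congrArg (T3 u v w) hD
    rw [map_add, key12, key13, key23] at h
    simp only [hctr1, hctr2] at h
    exact h
  intro a b
  constructor
  · apply dual_sep (F := F)
    intro u
    have h1 : u (e (Rst (e a) b - Lp (e b) a)) = (Rst (e a) b - Lp (e b) a) (e u) :=
      hesymm u _
    have h2 := star b u a
    rw [h1]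
    simp only [LinearMap.sub_apply, hRst, hLp, LinearMap.add_apply, map_add] at h2 ⊢
    linear_combination h2
  · apply dual_sep (F := F)
    intro u
    have h1 : u (e (- Rs (e a) b + Lst (e b) a)) = (- Rs (e a) b + Lst (e b) a) (e u) :=
      hesymm u _
    have h2 := star a b u
    rw [h1]
    simp only [LinearMap.add_apply, LinearMap.neg_apply, hRs, hLst, map_add] at h2 ⊢
    linear_combination h2
end

section
/- Let (A,≻,≺) be a finite-dimensional dendriform algebra over a field F, with {e_1,…,e_n} a basis of A and {e_1*,…,e_n*} its dual basis. Define a dendriform algebra structure on D = A ⊕ A* by (x+a*) ≻' (y+b*) = x≻y + R≺*(x)b* and (x+a*) ≺' (y+b*) = x≺y + L≻*(y)a*, where ⟨R≺*(x)a*, y⟩ = ⟨a*, y≺x⟩ and ⟨L≻*(x)a*, y⟩ = ⟨a*, x≻y⟩. Then: (i) (D,≻',≺') is a dendriform algebra; (ii) r = Σ_i (e_i ⊗ e_i* + e_i* ⊗ e_i) ∈ D⊗D is a symmetric solution of the D-equation in D; (iii) r is nondegenerate and the bilinear form B on D induced by r⁻¹ is B(x+a*, y+b*) = ⟨x, b*⟩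 + ⟨a*, y⟩. -/
open TensorProduct LinearMap

/-!
Pair both sides of the `D`-equation with `φ ⊗ ψ ⊗ χ`. When `r` is symmetric and, read as a map
`D* → D`, inverse to a symmetric form `B`, write `φ = B(x, ·)`, `ψ = B(y, ·)`, `χ = B(z, ·)`: the
equation becomes `B(x, y ∗ z) = B(z, x ≺ y) + B(y, z ≻ x)`. For the canonical `r` on `A ⊕ A*` the
form `B` is the natural pairing `⟨x, b*⟩ + ⟨a*, y⟩`, and this identity is immediate from the
definitions of `R≺*` and `L≻*`.
-/

section

variable {F V : Type*} [Field F] [AddCommGroup V] [Module F V]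

@[simp]
lemma t12_tmul (m : V →ₗ[F] V →ₗ[F] V) (x y x' y' : V) :
    t12 m ((x ⊗ₜ y) ⊗ₜ (x' ⊗ₜ y')) = m x x' ⊗ₜ (y ⊗ₜ y') := by
  simp [t12]

@[simp]
lemma t13_tmul (m : V →ₗ[F] V →ₗ[F] V) (x y x' y' : V) :
    t13 m ((x ⊗ₜ y) ⊗ₜ (x' ⊗ₜ y')) = x ⊗ₜ (x' ⊗ₜ m y y') := by
  simp [t13]

@[simp]
lemma t23_tmul (m : V →ₗ[F] V →ₗ[F] V) (x y x' y' : V) :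
    t23 m ((x ⊗ₜ y) ⊗ₜ (x' ⊗ₜ y')) = x' ⊗ₜ (m x y' ⊗ₜ y) := by
  simp [t23]

/-- `r ∈ V ⊗ V` read as the linear map `V* → V`, `φ ↦ (id ⊗ φ) r`. -/
noncomputable def contractSnd : V ⊗[F] V →ₗ[F] Module.Dual F V →ₗ[F] V :=
  TensorProduct.lift (smulRightₗ ∘ₗ Module.Dual.eval F V).flip

@[simp]
lemma contractSnd_tmul (x y : V) (φ : Module.Dual F V) :
    contractSnd (x ⊗ₜ y) φ = φ y • x :=
  rfl

lemma pair2_eq_apply_contractSnd (u v : Module.Dual F V) (r : V ⊗[F] V) :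
    pair2 u v r = u (contractSnd r v) := by
  induction r using TensorProduct.induction_on with
  | zero => simp
  | tmul x y => simp [pair2, mul_comm]
  | add r r' hr hr' => simp [hr, hr']

lemma pair2_comm (u v : Module.Dual F V) (r : V ⊗[F] V) :
    pair2 u v (TensorProduct.comm F V V r) = pair2 v u r := by
  induction r using TensorProduct.induction_on with
  | zero => simp
  | tmul x y => simp [pair2, mul_comm]
  | add r r' hr hr' => simp [hr, hr']

noncomputable def pair3 (φ ψ χ : Module.Dual F V) : V ⊗[F] (V ⊗[F] V) →ₗ[F] F :=
  (TensorProduct.lid F F).toLinearMap ∘ₗ TensorProduct.map φ (pair2 ψ χ)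

@[simp]
lemma pair3_tmul (φ ψ χ : Module.Dual F V) (x y z : V) :
    pair3 φ ψ χ (x ⊗ₜ (y ⊗ₜ z)) = φ x * (ψ y * χ z) := by
  simp [pair3, pair2]

/-- The coordinate functionals of a tensor basis are of the form `pair3 φ ψ χ`. -/
lemma eq_of_forall_pair3_eq {t t' : V ⊗[F] (V ⊗[F] V)}
    (h : ∀ φ ψ χ : Module.Dual F V, pair3 φ ψ χ t = pair3 φ ψ χ t') : t = t' := by
  let b := Module.Free.chooseBasis F V
  let bT := b.tensorProduct (b.tensorProduct b)
  have hcoord : ∀ i j k, bT.coord (i, (j, k)) = pair3 (b.coord i) (b.coord j) (b.coord k) := by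
    intro i j k
    ext x y z
    simp [bT, mul_comm]
  refine bT.ext_elem fun ⟨i, j, k⟩ => ?_
  simpa only [← Module.Basis.coord_apply, hcoord] using h _ _ _

section Pairing

variable (m : V →ₗ[F] V →ₗ[F] V) (φ ψ χ : Module.Dual F V) (r r' : V ⊗[F] V)

lemma pair3_t12 :
    pair3 φ ψ χ (t12 m (r ⊗ₜ r')) = φ (m (contractSnd r ψ) (contractSnd r' χ)) := by
  induction r using TensorProduct.induction_on with
  | zero => simp
  | add r₁ r₂ h₁ h₂ => simp [TensorProduct.add_tmul, h₁, h₂]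
  | tmul x y =>
    induction r' using TensorProduct.induction_on with
    | zero => simp
    | add r₁ r₂ h₁ h₂ => simp [TensorProduct.tmul_add, h₁, h₂]
    | tmul x' y' =>
      simp only [t12_tmul, pair3_tmul, contractSnd_tmul, map_smul,
        LinearMap.smul_apply, smul_eq_mul]
      ring

lemma pair3_t13 :
    pair3 φ ψ χ (t13 m (r ⊗ₜ r')) =
      χ (m (contractSnd (TensorProduct.comm F V V r) φ)
        (contractSnd (TensorProduct.comm F V V r') ψ)) := by
  induction r using TensorProduct.induction_on with
  | zero => simp
  | add r₁ r₂ h₁ h₂ => simp [TensorProduct.add_tmul, h₁, h₂]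
  | tmul x y =>
    induction r' using TensorProduct.induction_on with
    | zero => simp
    | add r₁ r₂ h₁ h₂ => simp [TensorProduct.tmul_add, h₁, h₂]
    | tmul x' y' =>
      simp only [t13_tmul, pair3_tmul, TensorProduct.comm_tmul, contractSnd_tmul, map_smul,
        LinearMap.smul_apply, smul_eq_mul]
      ring

lemma pair3_t23 :
    pair3 φ ψ χ (t23 m (r ⊗ₜ r')) =
      ψ (m (contractSnd r χ) (contractSnd (TensorProduct.comm F V V r') φ)) := by
  induction r using TensorProduct.induction_on with
  | zero => simp
  | add r₁ r₂ h₁ h₂ => simp [TensorProduct.add_tmul, h₁, h₂]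
  | tmul x y =>
    induction r' using TensorProduct.induction_on with
    | zero => simp
    | add r₁ r₂ h₁ h₂ => simp [TensorProduct.tmul_add, h₁, h₂]
    | tmul x' y' =>
      simp only [t23_tmul, pair3_tmul, TensorProduct.comm_tmul, contractSnd_tmul, map_smul,
        LinearMap.smul_apply, smul_eq_mul]
      ring

end Pairing

section InverseForm

variable {B : V →ₗ[F] Module.Dual F V} {r : V ⊗[F] V}
  (hB : ∀ x y, B x y = B y x) (hr : TensorProduct.comm F V V r = r)
  (hBr : ∀ x, contractSnd r (B x) = x)
include hB hr hBr

lemma apply_contractSnd_eq (φ : Module.Dual F V) : B (contractSnd r φ) = φ := by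
  ext w
  rw [hB, ← pair2_eq_apply_contractSnd, ← hr, pair2_comm, pair2_eq_apply_contractSnd, hBr]

theorem t12_eq_t13_add_t23_of_invariant (m p s : V →ₗ[F] V →ₗ[F] V)
    (hinv : ∀ x y z, B x (m y z) = B z (p x y) + B y (s z x)) :
    t12 m (r ⊗ₜ r) = t13 p (r ⊗ₜ r) + t23 s (r ⊗ₜ r) := by
  refine eq_of_forall_pair3_eq fun φ ψ χ => ?_
  rw [map_add, pair3_t12, pair3_t13, pair3_t23, hr]
  conv_lhs => rw [← apply_contractSnd_eq hB hr hBr φ]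
  rw [hinv, apply_contractSnd_eq hB hr hBr, apply_contractSnd_eq hB hr hBr]

end InverseForm

section DualDouble

variable {A : Type*} [AddCommGroup A] [Module F A]

noncomputable def dualPairingForm :
    (A × Module.Dual F A) →ₗ[F] Module.Dual F (A × Module.Dual F A) :=
  LinearMap.mk₂ F (fun u v => v.2 u.1 + u.2 v.1)
    (fun _ _ _ => by
      simp only [Prod.fst_add, Prod.snd_add, map_add, LinearMap.add_apply]; ring)
    (fun _ _ _ => by
      simp only [Prod.smul_fst, Prod.smul_snd, map_smul, LinearMap.smul_apply, smul_add])
    (fun _ _ _ => by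
      simp only [Prod.fst_add, Prod.snd_add, map_add, LinearMap.add_apply]; ring)
    (fun _ _ _ => by
      simp only [Prod.smul_fst, Prod.smul_snd, map_smul, LinearMap.smul_apply, smul_add])

@[simp]
lemma dualPairingForm_apply (u v : A × Module.Dual F A) :
    dualPairingForm u v = v.2 u.1 + u.2 v.1 :=
  rfl

lemma dualPairingForm_comm (u v : A × Module.Dual F A) :
    dualPairingForm u v = dualPairingForm v u :=
  add_comm _ _

variable {s p : A →ₗ[F] A →ₗ[F] A} {Rp Ls : A →ₗ[F] Module.Dual F A →ₗ[F] Module.Dual F A}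
  {sD pD : (A × Module.Dual F A) →ₗ[F] (A × Module.Dual F A) →ₗ[F] (A × Module.Dual F A)}

lemma isDendriform_prod_dual (hd : IsDendriform s p)
    (hRp : ∀ x y a, Rp x a y = a (p y x)) (hLs : ∀ x y a, Ls x a y = a (s x y))
    (hsD : ∀ u v, sD u v = (s u.1 v.1, Rp u.1 v.2))
    (hpD : ∀ u v, pD u v = (p u.1 v.1, Ls v.1 u.2)) :
    IsDendriform sD pD := by
  obtain ⟨hpp, hsp, hss⟩ := hd
  refine ⟨fun x y z => ?_, fun x y z => ?_, fun x y z => ?_⟩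
  · refine Prod.ext (by simp [hpD, hsD, hpp]) (LinearMap.ext fun w => ?_)
    simp [hpD, hsD, hLs, hss]
  · refine Prod.ext (by simp [hpD, hsD, hsp]) (LinearMap.ext fun w => ?_)
    simp [hpD, hsD, hLs, hRp, hsp]
  · refine Prod.ext (by simp [hpD, hsD, hss]) (LinearMap.ext fun w => ?_)
    simp [hpD, hsD, hRp, hpp]

lemma dualPairingForm_invariant
    (hRp : ∀ x y a, Rp x a y = a (p y x)) (hLs : ∀ x y a, Ls x a y = a (s x y))
    (hsD : ∀ u v, sD u v = (s u.1 v.1, Rp u.1 v.2))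
    (hpD : ∀ u v, pD u v = (p u.1 v.1, Ls v.1 u.2)) (x y z : A × Module.Dual F A) :
    dualPairingForm x ((sD + pD) y z) =
      dualPairingForm z (pD x y) + dualPairingForm y (sD z x) := by
  simp only [dualPairingForm_apply, LinearMap.add_apply, hsD, hpD, hRp, hLs, map_add]
  ring

lemma contractSnd_canonical {ι : Type*} [Fintype ι] (bA : Module.Basis ι F A)
    (u : A × Module.Dual F A) :
    contractSnd (∑ i : ι,
      (((bA i, 0) : A × Module.Dual F A) ⊗ₜ[F] (((0 : A), bA.coord i) : A × Module.Dual F A) +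
       (((0 : A), bA.coord i) : A × Module.Dual F A) ⊗ₜ[F] ((bA i, 0) : A × Module.Dual F A)))
      (dualPairingForm u) = u := by
  refine Prod.ext ?_ ?_
  · simp [Prod.fst_sum, bA.sum_repr]
  · simp [Prod.snd_sum, bA.sum_dual_apply_smul_coord]

end DualDouble

end

/-- on `D = A ⊕ A*` with products
`(x+a*) ≻' (y+b*) = x ≻ y + R≺*(x) b*` and
`(x+a*) ≺' (y+b*) = x ≺ y + L≻*(y) a*`:
(i) `D` is a dendriform algebra;
(ii) `r = Σᵢ (eᵢ ⊗ eᵢ* + eᵢ* ⊗ eᵢ)` is a symmetric solution of the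
`D`-equation in `D`;
(iii) `r` is nondegenerate and the bilinear form induced by `r⁻¹` is
`B(x+a*, y+b*) = ⟨x, b*⟩ + ⟨a*, y⟩`. -/
theorem canonical_symmetric_solution_of_D_equation
    {F A : Type*} [Field F] [AddCommGroup A] [Module F A]
    {ι : Type*} [Fintype ι] (bA : Module.Basis ι F A)
    (s p : A →ₗ[F] A →ₗ[F] A) (hd : IsDendriform s p)
    -- the dual operators `R≺*` and `L≻*`
    (Rp Ls : A →ₗ[F] Module.Dual F A →ₗ[F] Module.Dual F A)
    (hRp : ∀ (x y : A) (a : Module.Dual F A), Rp x a y = a (p y x))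
    (hLs : ∀ (x y : A) (a : Module.Dual F A), Ls x a y = a (s x y))
    -- the dendriform products on `D = A ⊕ A*`
    (sD pD : (A × Module.Dual F A) →ₗ[F] (A × Module.Dual F A) →ₗ[F]
      (A × Module.Dual F A))
    (hsD : ∀ u v : A × Module.Dual F A, sD u v = (s u.1 v.1, Rp u.1 v.2))
    (hpD : ∀ u v : A × Module.Dual F A, pD u v = (p u.1 v.1, Ls v.1 u.2))
    -- the canonical element `r = Σᵢ (eᵢ ⊗ eᵢ* + eᵢ* ⊗ eᵢ)`
    (r : (A × Module.Dual F A) ⊗[F] (A × Module.Dual F A))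
    (hr : r = ∑ i : ι,
      (((bA i, 0) : A × Module.Dual F A) ⊗ₜ[F]
        (((0 : A), bA.coord i) : A × Module.Dual F A) +
       (((0 : A), bA.coord i) : A × Module.Dual F A) ⊗ₜ[F]
        ((bA i, 0) : A × Module.Dual F A))) :
    IsDendriform sD pD ∧
    ((TensorProduct.comm F (A × Module.Dual F A) (A × Module.Dual F A)) r = r ∧
      t12 (sD + pD) (r ⊗ₜ r) = t13 pD (r ⊗ₜ r) + t23 sD (r ⊗ₜ r)) ∧
    (∃ e : Module.Dual F (A × Module.Dual F A) ≃ₗ[F] (A × Module.Dual F A),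
      (∀ u v : Module.Dual F (A × Module.Dual F A), u (e v) = pair2 u v r) ∧
      (∀ u v : A × Module.Dual F A, e.symm u v = v.2 u.1 + u.2 v.1)) := by
  have hsymm : TensorProduct.comm F _ _ r = r := by
    simp only [hr, map_sum, map_add, TensorProduct.comm_tmul, add_comm]
  have hcanon : ∀ u, contractSnd r (dualPairingForm u) = u := hr ▸ contractSnd_canonical bA
  have hcontract : ∀ φ, dualPairingForm (contractSnd r φ) = φ :=
    apply_contractSnd_eq dualPairingForm_comm hsymm hcanon
  refine ⟨isDendriform_prod_dual hd hRp hLs hsD hpD, ⟨hsymm, ?_⟩,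
    LinearEquiv.ofLinearMap (contractSnd r) dualPairingForm (LinearMap.ext hcanon)
      (LinearMap.ext hcontract), fun u v => (pair2_eq_apply_contractSnd u v r).symm,
    fun _ _ => rfl⟩
  exact t12_eq_t13_add_t23_of_invariant dualPairingForm_comm hsymm hcanon _ _ _
    (dualPairingForm_invariant hRp hLs hsD hpD)
end
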